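/- Let n be an even positive integer, F = 𝔽_{2^n}, R = W₂(F), and let f : F → F be a pseudo-planar function with f(0) = 0. Then for every g ∈ R, the number of ordered pairs (x,y) ∈ S₁ × S₁ with x + y = g equals: 1 if g ∈ S₃; 2 if g ∈ S₂; 2 if g ∈ S₄; and 0 otherwise. (In group-ring notation, S₁² = S₃ + 2·S₂ + 2·S₄.) -/

import Mathlib

open scoped Classical

noncomputable section

/-- The Galois ring `GR(4,n)`, realized as length-2 2-typical truncated Witt vectors
over `F = 𝔽_{2^n}`. -/
abbrev GR (n : ℕ) : Type := TruncatedWittVector 2 2 (GaloisField 2 n)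

/-- The truncated Teichmüller lift `τ : F → W₂(F)`. -/
def teich (n : ℕ) (x : GaloisField 2 n) : GR n :=
  WittVector.truncate 2 (WittVector.teichmuller 2 x)

/-- The lifted set `D_f = {τ(x) + 2·τ(f(x)^(2^(n-1))) : x ∈ F} ⊆ GR(4,n)`. -/
def Dset (n : ℕ) (f : GaloisField 2 n → GaloisField 2 n) : Set (GR n) :=
  {g | ∃ x : GaloisField 2 n, g = teich n x + 2 * teich n (f x ^ 2 ^ (n - 1))}

/-- `S₁ = D_f \ {0}`. -/
def S1 (n : ℕ) (f : GaloisField 2 n → GaloisField 2 n) : Set (GR n) :=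
  Dset n f \ {0}

/-- `S₂ = {−s : s ∈ S₁}`. -/
def S2 (n : ℕ) (f : GaloisField 2 n → GaloisField 2 n) : Set (GR n) :=
  (fun s => -s) '' S1 n f

/-- `S₃ = 2R \ {0}`. -/
def S3 (n : ℕ) : Set (GR n) :=
  {g | ∃ x : GR n, g = 2 * x} \ {0}

/-- `S₄`: the elements outside `S₀ ∪ S₁ ∪ S₂ ∪ S₃` appearing in the multiset `D_f²`. -/
def S4 (n : ℕ) (f : GaloisField 2 n → GaloisField 2 n) : Set (GR n) :=
  {g | g ∉ ({0} : Set (GR n)) ∪ S1 n f ∪ S2 n f ∪ S3 n ∧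
    ∃ x ∈ Dset n f, ∃ y ∈ Dset n f, g = x + y}

/-- `S₅`: the remaining elements. -/
def S5 (n : ℕ) (f : GaloisField 2 n → GaloisField 2 n) : Set (GR n) :=
  {g | g ∉ ({0} : Set (GR n)) ∪ S1 n f ∪ S2 n f ∪ S3 n ∪ S4 n f}

/-!
In Witt coordinates `R = W₂(F)` is `F × F` with `(a, b) + (c, e) = (a + c, b + e + ac)`, and
`D_f` is the lifted graph `{(x, f x)}`, since `τ(a) + 2τ(√b) = (a, b)`. So `(x, f x) + (y, f y) = g`
means `x + y = g₀` and `f x + f y + xy = g₁`. On the diagonal these are the points `(0, x²)`,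
which gives `S₃`; off the diagonal pseudo-planarity makes the sum determine the unordered pair
`{x, y}`, so every `g` is hit by 0 or 2 ordered pairs of points of `S₁`, and by none when
`g = (z, f z) + (0, 0)` lies in `D_f` itself.

What remains is that every `-(z, f z)` with `z ≠ 0` is a sum of two points of `D_f`. As
`(z, f z) = (0, 0) + (z, f z)` is one, it suffices that the number of representations of `g`
equals that of `-g`, which by Fourier inversion on `R` holds once every character sum
`S(χ) = ∑ₓ χ(x, f x)` has a real square. The characters take values in `{±1, ±i}` because
`4R = 0`, so `S(χ)` is a Gaussian integer; for `χ ≠ 0` pseudo-planarity gives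
`|S(χ)|² ∈ {0, 2ⁿ}`, and a Gaussian integer of norm `4^(n/2)` lies on an axis, so its square is
real.
-/

namespace WittVector

open MvPolynomial in
theorem wittAdd_two_one :
    wittAdd 2 1 = (X (0, 1) + X (1, 1) - X (0, 0) * X (1, 0) : MvPolynomial (Fin 2 × ℕ) ℤ) := by
  have h := wittStructureInt_prop 2 (X (0 : Fin 2) + X 1) 1
  simp only [wittPolynomial_one, Nat.cast_ofNat, map_ofNat, map_add, map_mul, map_pow,
    bind₁_X_right, rename_X] at h
  rw [← wittAdd, wittAdd_zero] at h
  apply mul_left_cancel₀ (two_ne_zero : (2 : MvPolynomial (Fin 2 × ℕ) ℤ) ≠ 0)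
  linear_combination h

theorem add_coeff_one_of_two {R : Type*} [CommRing R] (x y : WittVector 2 R) :
    (x + y).coeff 1 = x.coeff 1 + y.coeff 1 - x.coeff 0 * y.coeff 0 := by
  simp [add_coeff, wittAdd_two_one, peval, Function.uncurry]

end WittVector

namespace TruncatedWittVector

section Coordinates

variable {p : ℕ} {R : Type*}

def mk₂ (p : ℕ) (a b : R) : TruncatedWittVector p 2 R := mk p ![a, b]

@[simp] theorem coeff_zero_mk₂ (a b : R) : (mk₂ p a b).coeff 0 = a := coeff_mk ..

@[simp] theorem coeff_one_mk₂ (a b : R) : (mk₂ p a b).coeff 1 = b := coeff_mk ..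

theorem mk₂_coeff (x : TruncatedWittVector p 2 R) : mk₂ p (x.coeff 0) (x.coeff 1) = x :=
  ext fun i => by fin_cases i <;> simp

@[simp] theorem mk₂_inj {a b c e : R} : mk₂ p a b = mk₂ p c e ↔ a = c ∧ b = e :=
  ⟨fun h => ⟨by simpa using congrArg (coeff 0) h, by simpa using congrArg (coeff 1) h⟩,
    by rintro ⟨rfl, rfl⟩; rfl⟩

def coordEquiv : TruncatedWittVector p 2 R ≃ R × R where
  toFun x := (x.coeff 0, x.coeff 1)
  invFun a := mk₂ p a.1 a.2
  left_inv := mk₂_coeff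
  right_inv _ := by simp

variable [Fact p.Prime] [CommRing R]

theorem mk₂_zero : mk₂ p (0 : R) 0 = 0 := by
  rw [← mk₂_coeff 0]; simp

theorem truncate_teichmuller (r : R) :
    WittVector.truncate 2 (WittVector.teichmuller p r) = mk₂ p r 0 := by
  rw [← mk₂_coeff (WittVector.truncate 2 _)]
  simp [WittVector.coeff_truncate, WittVector.teichmuller_coeff_zero,
    WittVector.teichmuller_coeff_pos p r 1 one_pos]

end Coordinates

variable {R : Type*} [CommRing R]

theorem mk₂_add_mk₂ (a b c e : R) :
    mk₂ 2 a b + mk₂ 2 c e = mk₂ 2 (a + c) (b + e - a * c) := by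
  obtain ⟨x, hx⟩ := WittVector.truncate_surjective 2 2 R (mk₂ 2 a b)
  obtain ⟨y, hy⟩ := WittVector.truncate_surjective 2 2 R (mk₂ 2 c e)
  have coeff_eq {z : WittVector 2 R} {u v : R} (h : WittVector.truncate 2 z = mk₂ 2 u v) :
      z.coeff 0 = u ∧ z.coeff 1 = v := by
    rw [← mk₂_coeff (WittVector.truncate 2 z), mk₂_inj, WittVector.coeff_truncate,
      WittVector.coeff_truncate] at h
    exact h
  rw [← hx, ← hy, ← map_add, ← mk₂_coeff (WittVector.truncate 2 (x + y)), mk₂_inj,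
    WittVector.coeff_truncate, WittVector.coeff_truncate]
  simp only [Fin.val_zero, Fin.val_one, WittVector.add_coeff_zero,
    WittVector.add_coeff_one_of_two, coeff_eq hx, coeff_eq hy, and_self]

theorem neg_mk₂ (a b : R) : -mk₂ 2 a b = mk₂ 2 (-a) (-b - a ^ 2) := by
  rw [neg_eq_iff_add_eq_zero, mk₂_add_mk₂, ← mk₂_zero, mk₂_inj]
  constructor <;> ring

theorem mk₂_sub_mk₂ (a b c e : R) :
    mk₂ 2 a b - mk₂ 2 c e = mk₂ 2 (a - c) (b - e + c * (a - c)) := by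
  rw [sub_eq_add_neg, neg_mk₂, mk₂_add_mk₂, mk₂_inj]
  constructor <;> ring

variable [CharP R 2]

theorem two_mul_mk₂ (a b : R) : 2 * mk₂ 2 a b = mk₂ 2 0 (a ^ 2) := by
  rw [two_mul, mk₂_add_mk₂, mk₂_inj, CharTwo.add_self_eq_zero, CharTwo.add_self_eq_zero,
    zero_sub, CharTwo.neg_eq, sq]
  exact ⟨rfl, rfl⟩

theorem four_nsmul_eq_zero (x : TruncatedWittVector 2 2 R) : 4 • x = 0 := by
  have h : 4 • x = 2 * (2 * x) := by rw [nsmul_eq_mul]; push_cast; ring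
  rw [h, ← mk₂_coeff x, two_mul_mk₂, two_mul_mk₂, zero_pow two_ne_zero, mk₂_zero]

end TruncatedWittVector

theorem Int.eq_zero_or_eq_zero_of_sq_add_sq_eq_four_pow {a b : ℤ} {k : ℕ}
    (h : a ^ 2 + b ^ 2 = 4 ^ k) : a = 0 ∨ b = 0 := by
  induction k generalizing a b with
  | zero =>
    by_contra! hab
    have ha := Int.one_le_abs hab.1
    have hb := Int.one_le_abs hab.2
    nlinarith [sq_abs a, sq_abs b]
  | succ k ih =>
    have sq_emod (c : ℤ) : c ^ 2 % 4 = 0 ∧ 2 ∣ c ∨ c ^ 2 % 4 = 1 := by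
      rcases Int.even_or_odd c with ⟨m, rfl⟩ | hc
      · left; constructor
        · rw [show (m + m) ^ 2 = 4 * m ^ 2 by ring]; omega
        · omega
      · exact Or.inr (Int.sq_mod_four_eq_one_of_odd hc)
    have h4 : (a ^ 2 + b ^ 2) % 4 = 0 := by rw [h, pow_succ]; omega
    obtain ⟨ha, a', rfl⟩ | ha := sq_emod a <;> obtain ⟨hb, b', rfl⟩ | hb := sq_emod b <;>
      try omega
    have : 4 * (a' ^ 2 + b' ^ 2) = 4 * 4 ^ k := by rw [← pow_succ']; linear_combination h
    simpa using ih (by omega)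

open ComplexConjugate

namespace GaussianInt

theorem conj_sq_toComplex_of_norm_eq {w : GaussianInt} {k : ℕ}
    (h : w.norm = 0 ∨ w.norm = 4 ^ k) :
    conj ((w : ℂ) ^ 2) = (w : ℂ) ^ 2 := by
  rcases h with h | h
  · simp [norm_eq_zero.mp h]
  have hw : w.re = 0 ∨ w.im = 0 := by
    refine Int.eq_zero_or_eq_zero_of_sq_add_sq_eq_four_pow (k := k) ?_
    rw [← h, Zsqrtd.norm_def]; ring
  rcases hw with hw | hw <;> simp [toComplex_def, hw, map_pow]

end GaussianInt

theorem AddChar.apply_mem_range_toComplex {G : Type*} [AddMonoid G] (ψ : AddChar G ℂ) {x : G}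
    (hx : 4 • x = 0) : ψ x ∈ GaussianInt.toComplex.range := by
  have h4 : ψ x ^ 4 = 1 := by rw [← map_nsmul_eq_pow, hx, map_zero_eq_one]
  have hroots : (ψ x - 1) * (ψ x + 1) * ((ψ x - Complex.I) * (ψ x + Complex.I)) = 0 := by
    linear_combination h4 - (ψ x ^ 2 - 1) * Complex.I_sq
  rcases mul_eq_zero.mp hroots with h | h <;> rcases mul_eq_zero.mp h with h | h
  · exact ⟨1, by rw [map_one]; linear_combination -h⟩
  · exact ⟨-1, by rw [map_neg, map_one]; linear_combination -h⟩
  · exact ⟨⟨0, 1⟩, by rw [GaussianInt.toComplex_def']; push_cast; linear_combination -h⟩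
  · exact ⟨⟨0, -1⟩, by rw [GaussianInt.toComplex_def']; push_cast; linear_combination -h⟩

open TruncatedWittVector

section PseudoPlanar

variable {K : Type*} (f : K → K)

def graphLift (x : K) : TruncatedWittVector 2 2 K := mk₂ 2 x (f x)

@[simp] theorem coeff_zero_graphLift (x : K) : (graphLift f x).coeff 0 = x := coeff_zero_mk₂ ..

@[simp] theorem coeff_one_graphLift (x : K) : (graphLift f x).coeff 1 = f x := coeff_one_mk₂ ..

theorem graphLift_injective : Function.Injective (graphLift f) := fun x y h => by
  simpa using congrArg (coeff 0) h

variable [CommRing K]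

def IsPseudoPlanar : Prop :=
  ∀ ε : K, ε ≠ 0 → Function.Bijective (fun x => f (x + ε) + f x + ε * x)

theorem graphLift_zero (hf0 : f 0 = 0) : graphLift f 0 = 0 := by
  rw [graphLift, hf0, mk₂_zero]

variable [CharP K 2]

theorem graphLift_add_graphLift (x y : K) :
    graphLift f x + graphLift f y = mk₂ 2 (x + y) (f x + f y + x * y) := by
  rw [graphLift, graphLift, mk₂_add_mk₂, CharTwo.sub_eq_add]

theorem graphLift_add_sub_graphLift (x ε : K) :
    graphLift f (x + ε) - graphLift f x = mk₂ 2 ε (f (x + ε) + f x + ε * x) := by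
  rw [graphLift, graphLift, mk₂_sub_mk₂, mk₂_inj, add_sub_cancel_left, CharTwo.sub_eq_add,
    mul_comm]
  exact ⟨rfl, rfl⟩

-- Otherwise `x ↦ f (x + (b + c)) + f x + (b + c) * x` would take the same value at `a` and `c`.
theorem IsPseudoPlanar.eq_or_eq_of_graphLift_add_eq {f : K → K} (hf : IsPseudoPlanar f)
    {a b c e : K}
    (h : graphLift f a + graphLift f b = graphLift f c + graphLift f e) :
    c = a ∧ e = b ∨ c = b ∧ e = a := by
  simp only [graphLift_add_graphLift, mk₂_inj] at h
  obtain ⟨h₀, h₁⟩ := h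
  have two : (2 : K) = 0 := CharTwo.two_eq_zero
  have he : e = a + b + c := by linear_combination -h₀ - c * two
  by_cases hca : c = a
  · exact Or.inl ⟨hca, by rw [he, hca]; linear_combination a * two⟩
  by_cases hcb : c = b
  · exact Or.inr ⟨hcb, by rw [he, hcb]; linear_combination b * two⟩
  have hη : b + c ≠ 0 := fun h => hcb (by linear_combination h - b * two)
  refine absurd ((hf (b + c) hη).injective ?_).symm hca
  subst he
  rw [show a + (b + c) = a + b + c by ring, show c + (b + c) = b by linear_combination c * two]
  linear_combination -h₁ + (f a - f c + a * b - b * c - c * c) * two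

end PseudoPlanar

open Finset

section AddPairs
variable {G ι : Type*} [AddCommGroup G] [Fintype G] [DecidableEq G] [Fintype ι]

theorem card_mul_card_filter_add_eq (d : ι → G) (g : G) :
    (Fintype.card G : ℂ) * #{p : ι × ι | d p.1 + d p.2 = g} =
      ∑ ψ : AddChar G ℂ, ψ (-g) * (∑ i, ψ (d i)) ^ 2 := by
  have hψ (ψ : AddChar G ℂ) :
      ψ (-g) * (∑ i, ψ (d i)) ^ 2 = ∑ p : ι × ι, ψ (d p.1 + d p.2 - g) := by
    simp_rw [sq, sum_mul_sum, mul_sum, ← Fintype.sum_prod_type', sub_eq_add_neg,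
      AddChar.map_add_eq_mul]
    exact sum_congr rfl fun _ _ => by ring
  simp_rw [hψ]
  rw [sum_comm]
  simp_rw [AddChar.sum_apply_eq_ite, sub_eq_zero, sum_ite, sum_const_zero, add_zero, sum_const,
    nsmul_eq_mul, mul_comm]

theorem card_filter_add_eq_neg (d : ι → G)
    (hd : ∀ ψ : AddChar G ℂ, conj ((∑ i, ψ (d i)) ^ 2) = (∑ i, ψ (d i)) ^ 2) (g : G) :
    #{p : ι × ι | d p.1 + d p.2 = -g} = #{p : ι × ι | d p.1 + d p.2 = g} := by
  have hG : (Fintype.card G : ℂ) ≠ 0 := Nat.cast_ne_zero.mpr Fintype.card_ne_zero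
  apply Nat.cast_injective (R := ℂ)
  apply mul_left_cancel₀ hG
  calc (Fintype.card G : ℂ) * #{p : ι × ι | d p.1 + d p.2 = -g}
      = ∑ ψ : AddChar G ℂ, ψ g * (∑ i, ψ (d i)) ^ 2 := by
        rw [card_mul_card_filter_add_eq, neg_neg]
    _ = conj (∑ ψ : AddChar G ℂ, ψ (-g) * (∑ i, ψ (d i)) ^ 2) := by
        simp_rw [map_sum, map_mul, hd, AddChar.map_neg_eq_conj, Complex.conj_conj]
    _ = (Fintype.card G : ℂ) * #{p : ι × ι | d p.1 + d p.2 = g} := by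
        rw [← card_mul_card_filter_add_eq, map_mul, Complex.conj_natCast, Complex.conj_natCast]

end AddPairs

section CharacterSum

theorem sum_apply_mk₂_zero_eq_zero_or {K : Type*} [CommRing K] [Fintype K]
    (χ : AddChar (TruncatedWittVector 2 2 K) ℂ) :
    ∑ c, χ (mk₂ 2 0 c) = 0 ∨ ∑ c, χ (mk₂ 2 0 c) = Fintype.card K := by
  let ψ : AddChar K ℂ := χ.compAddMonoidHom
    (AddMonoidHom.mk' (mk₂ 2 0) fun b c => by rw [mk₂_add_mk₂, zero_add, zero_mul, sub_zero])
  have h := AddChar.sum_eq_ite ψ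
  split_ifs at h
  exacts [Or.inr h, Or.inl h]

variable {K : Type*} [Field K] [Fintype K] [CharP K 2] (f : K → K)

def graphCharSum (χ : AddChar (TruncatedWittVector 2 2 K) ℂ) : ℂ := ∑ x, χ (graphLift f x)

theorem graphCharSum_mem_range (χ : AddChar (TruncatedWittVector 2 2 K) ℂ) :
    graphCharSum f χ ∈ GaussianInt.toComplex.range :=
  Subring.sum_mem _ fun _ _ => χ.apply_mem_range_toComplex (four_nsmul_eq_zero _)

theorem IsPseudoPlanar.graphCharSum_mul_conj {f : K → K} (hf : IsPseudoPlanar f)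
    {χ : AddChar (TruncatedWittVector 2 2 K) ℂ} (hχ : χ ≠ 0) :
    graphCharSum f χ * conj (graphCharSum f χ) = Fintype.card K - ∑ c, χ (mk₂ 2 0 c) := by
  have hsum : ∑ ε, ∑ c, χ (mk₂ 2 ε c) = 0 := by
    rw [← Fintype.sum_prod_type', ← AddChar.sum_eq_zero_iff_ne_zero.mpr hχ]
    exact (coordEquiv.symm.sum_comp _)
  calc graphCharSum f χ * conj (graphCharSum f χ)
      = ∑ ε, ∑ x, χ (graphLift f (x + ε) - graphLift f x) := by
        simp_rw [graphCharSum, map_sum, sum_mul_sum, ← AddChar.map_neg_eq_conj,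
          ← AddChar.map_add_eq_mul, ← sub_eq_add_neg]
        rw [sum_comm]
        refine (sum_congr rfl fun y _ => Equiv.sum_comp (Equiv.addLeft y) _).symm.trans sum_comm
    _ = Fintype.card K + ∑ ε ∈ univ.erase 0, ∑ c, χ (mk₂ 2 ε c) := by
        rw [← add_sum_erase _ _ (mem_univ 0)]
        -- for `ε ≠ 0`, pseudo-planarity makes `x ↦ d(x + ε) - d(x)` a bijection onto the
        -- elements with first coordinate `ε`
        congr 1
        · simp
        · refine sum_congr rfl fun ε hε => ?_
          simp_rw [graphLift_add_sub_graphLift]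
          exact (hf ε (ne_of_mem_erase hε)).sum_comp fun c => χ (mk₂ 2 ε c)
    _ = Fintype.card K - ∑ c, χ (mk₂ 2 0 c) := by
        rw [sum_erase_eq_sub (mem_univ 0), hsum]; ring

theorem IsPseudoPlanar.conj_graphCharSum_sq {f : K → K} (hf : IsPseudoPlanar f) {k : ℕ}
    (hK : Fintype.card K = 4 ^ k) (χ : AddChar (TruncatedWittVector 2 2 K) ℂ) :
    conj (graphCharSum f χ ^ 2) = graphCharSum f χ ^ 2 := by
  by_cases hχ : χ = 0
  · simp [hχ, graphCharSum]
  obtain ⟨w, hw⟩ := graphCharSum_mem_range f χ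
  rw [← hw]
  refine GaussianInt.conj_sq_toComplex_of_norm_eq (k := k) ?_
  have hnorm : (w.norm : ℂ) = Fintype.card K - ∑ c, χ (mk₂ 2 0 c) := by
    rw [GaussianInt.intCast_complex_norm, ← Complex.mul_conj, hw, hf.graphCharSum_mul_conj hχ]
  rcases sum_apply_mk₂_zero_eq_zero_or χ with h | h <;> rw [h] at hnorm
  · rw [sub_zero, hK] at hnorm
    exact Or.inr (mod_cast hnorm)
  · rw [sub_self] at hnorm
    exact Or.inl (mod_cast hnorm)

theorem IsPseudoPlanar.exists_graphLift_add_eq_neg {f : K → K} (hf : IsPseudoPlanar f) {k : ℕ}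
    (hK : Fintype.card K = 4 ^ k) {g : TruncatedWittVector 2 2 K}
    (h : ∃ x y, graphLift f x + graphLift f y = g) :
    ∃ x y, graphLift f x + graphLift f y = -g := by
  obtain ⟨x, y, hxy⟩ := h
  have hpos : 0 < #{p : K × K | graphLift f p.1 + graphLift f p.2 = -g} := by
    rw [card_filter_add_eq_neg _ (hf.conj_graphCharSum_sq hK)]
    exact card_pos.mpr ⟨(x, y), by simp [hxy]⟩
  obtain ⟨⟨x', y'⟩, hp⟩ := card_pos.mp hpos
  exact ⟨x', y', by simpa using hp⟩

end CharacterSum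

section Counting

variable {K : Type*} [Field K] [CharP K 2] (f : K → K)

theorem graphLift_add_graphLift_eq_iff {x y : K} {g : TruncatedWittVector 2 2 K} :
    graphLift f x + graphLift f y = g ↔ x + y = g.coeff 0 ∧ f x + f y + x * y = g.coeff 1 := by
  rw [graphLift_add_graphLift, ← mk₂_inj, mk₂_coeff]

theorem neg_graphLift_notMem_range {z : K} (hz : z ≠ 0) :
    -graphLift f z ∉ Set.range (graphLift f) := by
  rintro ⟨w, hw⟩
  rw [graphLift, graphLift, neg_mk₂, mk₂_inj, CharTwo.neg_eq, CharTwo.neg_eq,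
    CharTwo.sub_eq_add] at hw
  obtain ⟨rfl, hw⟩ := hw
  exact hz (pow_eq_zero_iff two_ne_zero |>.mp (by linear_combination -hw))

def nonzeroGraphPairs (g : TruncatedWittVector 2 2 K) : Set (K × K) :=
  {q | q.1 ≠ 0 ∧ q.2 ≠ 0 ∧ graphLift f q.1 + graphLift f q.2 = g}

def IsOffDiagonalSum (g : TruncatedWittVector 2 2 K) : Prop :=
  g.coeff 0 ≠ 0 ∧ g ∉ Set.range (graphLift f) ∧ ∃ x y, graphLift f x + graphLift f y = g

theorem ncard_nonzeroGraphPairs_of_coeff_zero [Finite K] {g : TruncatedWittVector 2 2 K}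
    (hg : g.coeff 0 = 0) : (nonzeroGraphPairs f g).ncard = if g = 0 then 0 else 1 := by
  obtain ⟨c, hc⟩ := (Finite.injective_iff_surjective.mp (frobenius_inj K 2)) (g.coeff 1)
  rw [frobenius_def] at hc
  have hg' : g = mk₂ 2 0 (c ^ 2) := by rw [hc, ← hg, mk₂_coeff]
  have hpairs : nonzeroGraphPairs f g = {q | c ≠ 0 ∧ q = (c, c)} := by
    ext ⟨x, y⟩
    simp only [nonzeroGraphPairs, Set.mem_ofPred_eq, graphLift_add_graphLift_eq_iff, hg,
      CharTwo.add_eq_zero, Prod.mk.injEq, ← hc]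
    constructor
    · rintro ⟨hx, -, rfl, hxc⟩
      rw [CharTwo.add_self_eq_zero, zero_add, ← sq] at hxc
      obtain rfl := frobenius_inj K 2 hxc
      exact ⟨hx, rfl, rfl⟩
    · rintro ⟨hc0, rfl, rfl⟩
      exact ⟨hc0, hc0, rfl, by rw [CharTwo.add_self_eq_zero, zero_add, sq]⟩
  have hc0 : c = 0 ↔ g = 0 := by rw [hg', ← mk₂_zero, mk₂_inj]; simp
  by_cases h : c = 0 <;> simp [hpairs, h, ← hc0]

variable {f}

theorem IsPseudoPlanar.nonzeroGraphPairs_eq_pair (hf : IsPseudoPlanar f) (hf0 : f 0 = 0)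
    {g : TruncatedWittVector 2 2 K} (hgD : g ∉ Set.range (graphLift f)) {a b : K}
    (hab : graphLift f a + graphLift f b = g) : nonzeroGraphPairs f g = {(a, b), (b, a)} := by
  have ha : a ≠ 0 := by
    rintro rfl
    exact hgD ⟨b, by rw [← hab, graphLift_zero f hf0, zero_add]⟩
  have hb : b ≠ 0 := by
    rintro rfl
    exact hgD ⟨a, by rw [← hab, graphLift_zero f hf0, add_zero]⟩
  ext ⟨x, y⟩
  simp only [nonzeroGraphPairs, Set.mem_ofPred_eq, Set.mem_insert_iff, Set.mem_singleton_iff,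
    Prod.mk.injEq]
  constructor
  · rintro ⟨-, -, hxy⟩
    exact hf.eq_or_eq_of_graphLift_add_eq (hab.trans hxy.symm)
  · rintro (⟨rfl, rfl⟩ | ⟨rfl, rfl⟩)
    exacts [⟨ha, hb, hab⟩, ⟨hb, ha, by rw [add_comm, hab]⟩]

theorem IsPseudoPlanar.nonzeroGraphPairs_eq_empty_of_mem_range (hf : IsPseudoPlanar f)
    (hf0 : f 0 = 0) {g : TruncatedWittVector 2 2 K} (hg : g ∈ Set.range (graphLift f)) :
    nonzeroGraphPairs f g = ∅ := by
  obtain ⟨w, rfl⟩ := hg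
  refine Set.eq_empty_of_forall_notMem fun ⟨x, y⟩ ⟨hx, hy, hxy⟩ => ?_
  have hw : graphLift f w + graphLift f 0 = graphLift f x + graphLift f y := by
    rw [graphLift_zero f hf0, add_zero, hxy]
  rcases hf.eq_or_eq_of_graphLift_add_eq hw with ⟨-, rfl⟩ | ⟨rfl, -⟩ <;> contradiction

theorem IsPseudoPlanar.ncard_nonzeroGraphPairs [Finite K] (hf : IsPseudoPlanar f)
    (hf0 : f 0 = 0) (g : TruncatedWittVector 2 2 K) :
    (nonzeroGraphPairs f g).ncard =
      if g.coeff 0 = 0 then (if g = 0 then 0 else 1)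
      else if IsOffDiagonalSum f g then 2 else 0 := by
  by_cases h0 : g.coeff 0 = 0
  · rw [if_pos h0, ncard_nonzeroGraphPairs_of_coeff_zero f h0]
  rw [if_neg h0]
  split_ifs with hg
  · obtain ⟨-, hgD, a, b, hab⟩ := hg
    rw [hf.nonzeroGraphPairs_eq_pair hf0 hgD hab, Set.ncard_pair]
    intro h
    obtain rfl : a = b := (Prod.mk.inj h).1
    have hsum := ((graphLift_add_graphLift_eq_iff f).mp hab).1
    exact h0 (by rw [← hsum, CharTwo.add_self_eq_zero])
  by_cases hgD : g ∈ Set.range (graphLift f)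
  · rw [hf.nonzeroGraphPairs_eq_empty_of_mem_range hf0 hgD, Set.ncard_empty]
  rw [Set.ncard_eq_zero]
  exact Set.eq_empty_of_forall_notMem fun ⟨x, y⟩ ⟨_, _, hxy⟩ => hg ⟨h0, hgD, x, y, hxy⟩

end Counting

section GaloisRing

variable {n : ℕ}

instance : Fintype (GaloisField 2 n) := Fintype.ofFinite _

theorem GaloisField.card_two_eq_four_pow (hn : n ≠ 0) (heven : Even n) :
    Fintype.card (GaloisField 2 n) = 4 ^ (n / 2) := by
  obtain ⟨m, rfl⟩ := heven
  rw [← Nat.card_eq_fintype_card, GaloisField.card 2 _ hn, ← two_mul, pow_mul,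
    Nat.mul_div_cancel_left m two_pos]
  norm_num

theorem GaloisField.pow_two_pow_pred_sq (hn : n ≠ 0) (b : GaloisField 2 n) :
    (b ^ 2 ^ (n - 1)) ^ 2 = b := by
  rw [← pow_mul, ← pow_succ, Nat.sub_add_cancel (Nat.one_le_iff_ne_zero.mpr hn),
    ← GaloisField.card 2 n hn, Nat.card_eq_fintype_card, FiniteField.pow_card]

theorem teich_add_two_mul_teich (hn : n ≠ 0) (a b : GaloisField 2 n) :
    teich n a + 2 * teich n (b ^ 2 ^ (n - 1)) = mk₂ 2 a b := by
  rw [teich, teich, truncate_teichmuller, truncate_teichmuller, two_mul_mk₂,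
    GaloisField.pow_two_pow_pred_sq hn, mk₂_add_mk₂]
  simp

variable (f : GaloisField 2 n → GaloisField 2 n)

theorem Dset_eq_range (hn : n ≠ 0) : Dset n f = Set.range (graphLift f) := by
  ext g
  simp [Dset, teich_add_two_mul_teich hn, graphLift, eq_comm]

theorem mem_S1_iff (hn : n ≠ 0) (hf0 : f 0 = 0) {s : GR n} :
    s ∈ S1 n f ↔ ∃ z ≠ 0, graphLift f z = s := by
  simp only [S1, Dset_eq_range f hn, Set.mem_sdiff, Set.mem_range, Set.mem_singleton_iff]
  constructor
  · rintro ⟨⟨z, rfl⟩, hs⟩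
    exact ⟨z, by rintro rfl; exact hs (graphLift_zero f hf0), rfl⟩
  · rintro ⟨z, hz, rfl⟩
    exact ⟨⟨z, rfl⟩, fun h => hz <| graphLift_injective f <| h.trans (graphLift_zero f hf0).symm⟩

theorem mem_S3_iff (hn : n ≠ 0) {g : GR n} : g ∈ S3 n ↔ g.coeff 0 = 0 ∧ g ≠ 0 := by
  simp only [S3, Set.mem_sdiff, Set.mem_ofPred_eq, Set.mem_singleton_iff]
  refine and_congr_left fun _ => ⟨?_, fun hg => ?_⟩
  · rintro ⟨x, rfl⟩
    rw [← mk₂_coeff x, two_mul_mk₂, coeff_zero_mk₂]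
  · refine ⟨mk₂ 2 (g.coeff 1 ^ 2 ^ (n - 1)) 0, ?_⟩
    rw [two_mul_mk₂, GaloisField.pow_two_pow_pred_sq hn, ← hg, mk₂_coeff]

theorem mem_S4_iff (hn : n ≠ 0) (hf0 : f 0 = 0) {g : GR n} :
    g ∈ S4 n f ↔ IsOffDiagonalSum f g ∧ g ∉ S2 n f := by
  have h0 : (0 : GR n) ∈ Set.range (graphLift f) := ⟨0, graphLift_zero f hf0⟩
  have hD : g ∈ ({0} : Set (GR n)) ∪ S1 n f ↔ g ∈ Set.range (graphLift f) := by
    rw [S1, Dset_eq_range f hn, Set.union_sdiff_self,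
      Set.union_eq_right.mpr (Set.singleton_subset_iff.mpr h0)]
  have hsum : (∃ x ∈ Dset n f, ∃ y ∈ Dset n f, g = x + y) ↔
      ∃ x y, graphLift f x + graphLift f y = g := by
    simp [Dset_eq_range f hn, eq_comm]
  rw [S4, Set.mem_ofPred_eq, Set.mem_union, Set.mem_union, hD, mem_S3_iff hn, hsum,
    IsOffDiagonalSum, not_or, not_or]
  constructor
  · rintro ⟨⟨⟨hgD, hS2⟩, hS3⟩, hrep⟩
    exact ⟨⟨fun hc => hS3 ⟨hc, fun hg => hgD (hg ▸ h0)⟩, hgD, hrep⟩, hS2⟩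
  · rintro ⟨⟨hc, hgD, hrep⟩, hS2⟩
    exact ⟨⟨⟨hgD, hS2⟩, fun h => hc h.1⟩, hrep⟩

theorem IsPseudoPlanar.isOffDiagonalSum_of_mem_S2 {f : GaloisField 2 n → GaloisField 2 n}
    (hf : IsPseudoPlanar f) (hn : n ≠ 0) (heven : Even n) (hf0 : f 0 = 0) {g : GR n}
    (hg : g ∈ S2 n f) : IsOffDiagonalSum f g := by
  obtain ⟨s, hs, rfl⟩ := hg
  obtain ⟨z, hz, rfl⟩ := (mem_S1_iff f hn hf0).mp hs
  refine ⟨by simpa [graphLift, neg_mk₂] using hz, neg_graphLift_notMem_range f hz, ?_⟩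
  exact hf.exists_graphLift_add_eq_neg (GaloisField.card_two_eq_four_pow hn heven)
    ⟨0, z, by rw [graphLift_zero f hf0, zero_add]⟩

theorem natCard_S1_pairs_eq (hn : n ≠ 0) (hf0 : f 0 = 0) (g : GR n) :
    Nat.card {p : GR n × GR n // p.1 ∈ S1 n f ∧ p.2 ∈ S1 n f ∧ p.1 + p.2 = g} =
      (nonzeroGraphPairs f g).ncard := by
  have himage : Prod.map (graphLift f) (graphLift f) '' nonzeroGraphPairs f g =
      {p | p.1 ∈ S1 n f ∧ p.2 ∈ S1 n f ∧ p.1 + p.2 = g} := by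
    ext ⟨s, t⟩
    simp only [Set.mem_image, Prod.exists, Prod.map, Prod.mk.injEq, nonzeroGraphPairs,
      Set.mem_ofPred_eq, mem_S1_iff f hn hf0]
    constructor
    · rintro ⟨x, y, ⟨hx, hy, rfl⟩, rfl, rfl⟩
      exact ⟨⟨x, hx, rfl⟩, ⟨y, hy, rfl⟩, rfl⟩
    · rintro ⟨⟨x, hx, rfl⟩, ⟨y, hy, rfl⟩, rfl⟩
      exact ⟨x, y, ⟨hx, hy, rfl⟩, rfl, rfl⟩
  rw [← Set.ncard_image_of_injective _
    ((graphLift_injective f).prodMap (graphLift_injective f)), himage]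
  rfl

end GaloisRing

/-- **Lemma (`S₁² = S₃ + 2S₂ + 2S₄`, `n` even).** For a pseudo-planar function `f` on
`F = 𝔽_{2^n}` with `n` even and `f(0) = 0`, the number of ordered pairs
`(x,y) ∈ S₁ × S₁` with `x + y = g` equals `1` if `g ∈ S₃`, `2` if `g ∈ S₂`, `2` if
`g ∈ S₄`, and `0` otherwise. -/
theorem S1_sq_even
    (n : ℕ) (hn : 0 < n) (heven : Even n)
    (f : GaloisField 2 n → GaloisField 2 n)
    (hpp : ∀ ε : GaloisField 2 n, ε ≠ 0 →
      Function.Bijective (fun x => f (x + ε) + f x + ε * x))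
    (hf0 : f 0 = 0) (g : GR n) :
    Nat.card {p : GR n × GR n // p.1 ∈ S1 n f ∧ p.2 ∈ S1 n f ∧ p.1 + p.2 = g} =
      if g ∈ S3 n then 1
      else if g ∈ S2 n f then 2
      else if g ∈ S4 n f then 2
      else 0 := by
  have hf : IsPseudoPlanar f := hpp
  have hn0 : n ≠ 0 := hn.ne'
  have h3 := mem_S3_iff hn0 (g := g)
  have h2 := hf.isOffDiagonalSum_of_mem_S2 hn0 heven hf0 (g := g)
  have h4 := mem_S4_iff f hn0 hf0 (g := g)
  rw [natCard_S1_pairs_eq f hn0 hf0, hf.ncard_nonzeroGraphPairs hf0]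
  have hoff : IsOffDiagonalSum f g → g.coeff 0 ≠ 0 := And.left
  split_ifs <;> tauto
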